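/- For every k ≥ 1, there exists a continuous map f : S(ℍ^k) → S^{3k-1} (the unit sphere in ℝ^{3k}) satisfying f(x·e^{iθ}) = f(x) for all θ ∈ ℝ and f(x·j) = −f(x), for all x ∈ S(ℍ^k). -/

import Mathlib

noncomputable section

/-- The unit sphere `S^{n-1}` in `ℝ^n`. -/
noncomputable abbrev rSphere (n : ℕ) : Type :=
  Metric.sphere (0 : EuclideanSpace ℝ (Fin n)) 1

/-- `ℍ^k` with its `ℓ²` norm. -/
noncomputable abbrev Hn (k : ℕ) : Type :=
  PiLp 2 (fun _ : Fin k => Quaternion ℝ)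

/-- The unit sphere `S(ℍ^k)`. -/
noncomputable abbrev hSphere (k : ℕ) : Type := Metric.sphere (0 : Hn k) 1

/-- The quaternion `e^{iθ} = cos θ + (sin θ) i`. -/
def expI (θ : ℝ) : Quaternion ℝ := ⟨Real.cos θ, Real.sin θ, 0, 0⟩

/-- The quaternion unit `j`. -/
def quatJ : Quaternion ℝ := ⟨0, 0, 1, 0⟩

lemma norm_expI (θ : ℝ) : ‖expI θ‖ = 1 := by
  have h : Quaternion.normSq (expI θ) = 1 := by
    rw [Quaternion.normSq_def']
    simp only [expI]
    nlinarith [Real.sin_sq_add_cos_sq θ]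
  have h2 : ‖expI θ‖ * ‖expI θ‖ = 1 := by
    rw [← Quaternion.normSq_eq_norm_mul_self, h]
  rcases mul_self_eq_one_iff.1 h2 with h3 | h3
  · exact h3
  · nlinarith [norm_nonneg (expI θ)]

lemma norm_quatJ : ‖quatJ‖ = 1 := by
  have h : Quaternion.normSq quatJ = 1 := by
    rw [Quaternion.normSq_def']
    simp [quatJ]
  have h2 : ‖quatJ‖ * ‖quatJ‖ = 1 := by
    rw [← Quaternion.normSq_eq_norm_mul_self, h]
  rcases mul_self_eq_one_iff.1 h2 with h3 | h3
  · exact h3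
  · nlinarith [norm_nonneg quatJ]

lemma Hn.norm_congr {k : ℕ} (x y : Hn k) (h : ∀ a, ‖y a‖ = ‖x a‖) : ‖y‖ = ‖x‖ := by
  rw [PiLp.norm_eq_sum (by norm_num), PiLp.norm_eq_sum (by norm_num)]
  congr 1
  exact Finset.sum_congr rfl fun a _ => by rw [h]

/-- Coordinatewise right multiplication by a unit quaternion, on the sphere `S(ℍ^k)`. -/
def sphereRMul {k : ℕ} (u : Quaternion ℝ) (hu : ‖u‖ = 1) (x : hSphere k) : hSphere k :=
  ⟨(WithLp.toLp 2 (fun a => (x : Hn k) a * u) : Hn k), by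
    have hx := x.2
    simp only [mem_sphere_iff_norm, sub_zero] at hx ⊢
    have h := Hn.norm_congr (x : Hn k) (WithLp.toLp 2 (fun a => (x : Hn k) a * u))
      (fun a => by show ‖(x : Hn k) a * u‖ = _; rw [norm_mul, hu, mul_one])
    rw [h, hx]⟩

/-! The Hopf map `h(q) = q i q̄` takes values in `Im ℍ ≅ ℝ³`, has `|h(q)| = |q|²`, and satisfies
`h(q u) = q h(u) q̄`. Since `h(e^{iθ}) = i` and `h(j) = -i`, applying `h` coordinatewise to
`x ∈ S(ℍ^k)` gives a nowhere-vanishing map to `(Im ℍ)^k ≅ ℝ^{3k}` that is invariant under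
`x ↦ x·e^{iθ}` and odd under `x ↦ x·j`; normalising it gives the map to the sphere. -/

open Quaternion

namespace ContinuousMap

variable {X E : Type*} [TopologicalSpace X] [NormedAddCommGroup E] [NormedSpace ℝ E]
variable (g : C(X, E)) (hg : ∀ x, g x ≠ 0) {x y : X}

def normalize : C(X, Metric.sphere (0 : E) 1) where
  toFun x := ⟨‖g x‖⁻¹ • g x, by simp [norm_smul, hg x]⟩
  continuous_toFun := by
    have hg' : ∀ x, ‖g x‖ ≠ 0 := fun x => norm_ne_zero_iff.2 (hg x)
    exact ((g.continuous.norm.inv₀ hg').smul g.continuous).subtype_mk _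

theorem normalize_eq_of_apply_eq (h : g x = g y) : g.normalize hg x = g.normalize hg y :=
  Subtype.ext <| by simp [normalize, h]

theorem normalize_eq_neg_of_apply_eq_neg (h : g x = -g y) :
    g.normalize hg x = -g.normalize hg y :=
  Subtype.ext <| by simp [normalize, h]

end ContinuousMap

def quatI : ℍ[ℝ] := ⟨0, 1, 0, 0⟩

def hopf (q : ℍ[ℝ]) : ℍ[ℝ] := q * quatI * star q

theorem continuous_hopf : Continuous hopf :=
  (continuous_id.mul continuous_const).mul continuous_star

theorem hopf_mul (q u : ℍ[ℝ]) : hopf (q * u) = q * hopf u * star q := by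
  simp only [hopf, star_mul, mul_assoc]

theorem hopf_expI (θ : ℝ) : hopf (expI θ) = quatI := by
  ext <;> simp only [hopf, re_mul, imI_mul, imJ_mul, imK_mul, re_star, imI_star, imJ_star,
    imK_star] <;> simp [expI, quatI] <;> nlinarith [Real.sin_sq_add_cos_sq θ]

theorem hopf_quatJ : hopf quatJ = -quatI := by
  ext <;> simp only [hopf, re_mul, imI_mul, imJ_mul, imK_mul, re_star, imI_star, imJ_star,
    imK_star, re_neg, imI_neg, imJ_neg, imK_neg] <;> simp [quatJ, quatI]

theorem hopf_mul_expI (q : ℍ[ℝ]) (θ : ℝ) : hopf (q * expI θ) = hopf q := by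
  rw [hopf_mul, hopf_expI, hopf]

theorem hopf_mul_quatJ (q : ℍ[ℝ]) : hopf (q * quatJ) = -hopf q := by
  rw [hopf_mul, hopf_quatJ, hopf, mul_neg, neg_mul]

theorem re_hopf (q : ℍ[ℝ]) : (hopf q).re = 0 := by
  simp only [hopf, re_mul, imI_mul, imJ_mul, imK_mul, re_star, imI_star, imJ_star, imK_star]
  simp [quatI]
  ring

theorem normSq_hopf (q : ℍ[ℝ]) : normSq (hopf q) = normSq q ^ 2 := by
  have hI : normSq quatI = 1 := by
    rw [normSq_def']
    simp [quatI]
  rw [hopf, map_mul, map_mul, normSq_star, hI, mul_one, sq]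

theorem hopf_eq_zero_iff {q : ℍ[ℝ]} : hopf q = 0 ↔ q = 0 := by
  rw [← normSq_eq_zero, normSq_hopf, pow_eq_zero_iff two_ne_zero, normSq_eq_zero]

def imCoords (q : ℍ[ℝ]) : Fin 3 → ℝ := ![q.imI, q.imJ, q.imK]

theorem continuous_imCoords : Continuous imCoords :=
  continuous_imI.matrixVecCons <| continuous_imJ.matrixVecCons <|
    continuous_imK.matrixVecCons continuous_const

theorem imCoords_neg (q : ℍ[ℝ]) : imCoords (-q) = -imCoords q := by
  ext b
  fin_cases b <;> simp [imCoords]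

theorem eq_zero_of_re_eq_zero_of_imCoords_eq_zero {q : ℍ[ℝ]} (hre : q.re = 0)
    (him : imCoords q = 0) : q = 0 := by
  ext
  · exact hre
  · exact congrFun him 0
  · exact congrFun him 1
  · exact congrFun him 2

section ImCoordsPi

variable {k : ℕ}

def imCoordsPi (v : Fin k → ℍ[ℝ]) : EuclideanSpace ℝ (Fin (3 * k)) :=
  WithLp.toLp 2 fun m => imCoords (v (finProdFinEquiv.symm m).2) (finProdFinEquiv.symm m).1

theorem continuous_imCoordsPi : Continuous (imCoordsPi (k := k)) :=
  (PiLp.continuous_toLp 2 _).comp <| continuous_pi fun _ =>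
    (continuous_apply _).comp <| continuous_imCoords.comp <| continuous_apply _

theorem imCoordsPi_neg (v : Fin k → ℍ[ℝ]) : imCoordsPi (-v) = -imCoordsPi v := by
  ext
  simp [imCoordsPi, imCoords_neg]

theorem eq_zero_of_re_eq_zero_of_imCoordsPi_eq_zero {v : Fin k → ℍ[ℝ]}
    (hre : ∀ a, (v a).re = 0) (him : imCoordsPi v = 0) : v = 0 := by
  funext a
  refine eq_zero_of_re_eq_zero_of_imCoords_eq_zero (hre a) (funext fun b => ?_)
  simpa only [imCoordsPi, PiLp.toLp_apply, Equiv.symm_apply_apply, PiLp.zero_apply,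
    Pi.zero_apply] using congrArg (· (finProdFinEquiv (b, a))) him

end ImCoordsPi

section HopfVec

variable (k : ℕ)

def hopfVec : C(Hn k, EuclideanSpace ℝ (Fin (3 * k))) where
  toFun x := imCoordsPi fun a => hopf (x a)
  continuous_toFun := continuous_imCoordsPi.comp <| continuous_pi fun a =>
    continuous_hopf.comp <| (continuous_apply a).comp (PiLp.continuous_ofLp 2 _)

variable {k}

theorem hopfVec_apply (x : Hn k) : hopfVec k x = imCoordsPi fun a => hopf (x a) := rfl

theorem hopfVec_ne_zero {x : Hn k} (hx : x ≠ 0) : hopfVec k x ≠ 0 := by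
  refine fun h => hx (PiLp.ext fun a => hopf_eq_zero_iff.1 ?_)
  exact congrFun (eq_zero_of_re_eq_zero_of_imCoordsPi_eq_zero (fun a => re_hopf _) h) a

theorem hopfVec_rmul_expI (x : Hn k) (θ : ℝ) :
    hopfVec k (WithLp.toLp 2 fun a => x a * expI θ) = hopfVec k x := by
  simp only [hopfVec_apply, hopf_mul_expI]

theorem hopfVec_rmul_quatJ (x : Hn k) :
    hopfVec k (WithLp.toLp 2 fun a => x a * quatJ) = -hopfVec k x := by
  simp only [hopfVec_apply, hopf_mul_quatJ]
  exact imCoordsPi_neg fun a => hopf (x a)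

end HopfVec

theorem level_cp_le (k : ℕ) :
    ∃ f : C(hSphere k, rSphere (3 * k)),
      (∀ (θ : ℝ) (x : hSphere k), f (sphereRMul (expI θ) (norm_expI θ) x) = f x) ∧
      (∀ x : hSphere k, f (sphereRMul quatJ norm_quatJ x) = -f x) := by
  have hne (x : hSphere k) : hopfVec k x ≠ 0 := hopfVec_ne_zero (ne_zero_of_mem_unit_sphere x)
  refine ⟨((hopfVec k).restrict _).normalize hne, fun θ x => ?_, fun x => ?_⟩
  · exact ContinuousMap.normalize_eq_of_apply_eq _ _ (hopfVec_rmul_expI (x : Hn k) θ)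
  · exact ContinuousMap.normalize_eq_neg_of_apply_eq_neg _ _ (hopfVec_rmul_quatJ (x : Hn k))

end
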